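/- arXiv:2411.09275 — 4 statements merged into one kernel-verified Lean document; each statement's English description precedes it below -/
import Mathlib

section
/- The function f defined for real t > 2 by f(t) = t/(1 − log₂((t+2)/t)) − t is strictly decreasing on the interval (2, ∞). -/
/-!
Write `ℓ(t) = log₂((t+2)/t)`, so the function is `t / (1 - ℓ) - t` with derivative
`(ℓ (1 - ℓ) + t ℓ') / (1 - ℓ)²` and `t ℓ' = -2 / ((t+2) log 2)`. With `y = (t+2)/t ∈ (1, 2]`
the numerator is negative because `log y (log 2 - log y) < log 2 (1 - 1/y)`, which follows from
`1 - 1/y ≤ log y ≤ y - 1` and `log 2 < 1`.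
-/

open Real

lemma log_mul_sub_log_lt_mul_one_sub_inv {y c : ℝ} (hy : 1 < y) (hc : c < 1)
    (hyc : log y ≤ c) : log y * (c - log y) < c * (1 - y⁻¹) := by
  have hy0 : 0 < y := by linarith
  have hupper : log y ≤ y - 1 := log_le_sub_one_of_pos hy0
  have hlower : 1 - y⁻¹ ≤ log y := one_sub_inv_le_log_of_pos hy0
  have hquad : (c - (1 - y⁻¹)) * (y - 1) < c * (1 - y⁻¹) := by
    have : 0 < (y - 1) * (1 - y⁻¹) :=
      mul_pos (by linarith) (by linarith [inv_lt_one_of_one_lt₀ hy])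
    have h : (y - 1) * y⁻¹ = 1 - y⁻¹ := by field_simp
    nlinarith
  calc log y * (c - log y) ≤ (y - 1) * (c - log y) := by gcongr
    _ ≤ (y - 1) * (c - (1 - y⁻¹)) := by gcongr
    _ < c * (1 - y⁻¹) := by linarith

lemma logb_mul_one_sub_logb_lt {b y : ℝ} (hb : 1 < b) (hb' : log b < 1) (hy : 1 < y)
    (hyb : y ≤ b) : logb b y * (1 - logb b y) < (1 - y⁻¹) / log b := by
  have hlogb : 0 < log b := log_pos hb
  have key := log_mul_sub_log_lt_mul_one_sub_inv hy hb' (log_le_log (by linarith) hyb)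
  have : logb b y * (1 - logb b y) = log y * (log b - log y) / log b ^ 2 := by
    unfold logb
    field_simp
  rw [this, div_lt_div_iff₀ (by positivity) hlogb]
  nlinarith

lemma hasDerivAt_logb_add_div_self (b a : ℝ) {t : ℝ} (ht : t ≠ 0) (hta : t + a ≠ 0) :
    HasDerivAt (fun s => logb b ((s + a) / s)) (-a / (t * (t + a) * log b)) t := by
  refine ((((hasDerivAt_id' t).add_const a).div (hasDerivAt_id' t) ht).log
    (div_ne_zero hta ht) |>.div_const (log b)).congr_deriv ?_
  simp only [Pi.div_apply]
  field_simp
  ring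

lemma hasDerivAt_div_one_sub_sub_self {ℓ : ℝ → ℝ} {ℓ' t : ℝ} (hℓ : HasDerivAt ℓ ℓ' t)
    (h : ℓ t ≠ 1) :
    HasDerivAt (fun s => s / (1 - ℓ s) - s)
      ((ℓ t * (1 - ℓ t) + t * ℓ') / (1 - ℓ t) ^ 2) t := by
  have h' : 1 - ℓ t ≠ 0 := sub_ne_zero.mpr h.symm
  refine (((hasDerivAt_id' t).div ((hasDerivAt_const t 1).sub hℓ) h').sub
    (hasDerivAt_id' t)).congr_deriv ?_
  simp only [Pi.sub_apply]
  field_simp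
  ring

theorem stmt_7 :
    StrictAntiOn (fun t : ℝ => t / (1 - Real.logb 2 ((t + 2) / t)) - t)
      (Set.Ioi (2 : ℝ)) := by
  let ℓ : ℝ → ℝ := fun s => logb 2 ((s + 2) / s)
  let ℓ' : ℝ → ℝ := fun t => -2 / (t * (t + 2) * log 2)
  have hℓ_lt (t : ℝ) (ht : 2 < t) : ℓ t < 1 := by
    have : (t + 2) / t < 2 := by rw [div_lt_iff₀ (by positivity)]; linarith
    simpa using logb_lt_logb one_lt_two (by positivity) this
  have hderiv (t : ℝ) (ht : 2 < t) :
      HasDerivAt (fun s => s / (1 - ℓ s) - s)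
        ((ℓ t * (1 - ℓ t) + t * ℓ' t) / (1 - ℓ t) ^ 2) t :=
    hasDerivAt_div_one_sub_sub_self
      (hasDerivAt_logb_add_div_self 2 2 (by positivity) (by positivity)) (hℓ_lt t ht).ne
  have hnum (t : ℝ) (ht : 2 < t) : ℓ t * (1 - ℓ t) + t * ℓ' t < 0 := by
    have hy : 1 < (t + 2) / t := by rw [lt_div_iff₀ (by positivity)]; linarith
    have hyb : (t + 2) / t ≤ 2 := by rw [div_le_iff₀ (by positivity)]; linarith
    have hbound := logb_mul_one_sub_logb_lt one_lt_two (by linarith [log_two_lt_d9]) hy hyb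
    have htℓ' : t * ℓ' t = -((1 - ((t + 2) / t)⁻¹) / log 2) := by
      simp only [ℓ']
      field_simp
      ring
    linarith
  refine strictAntiOn_of_hasDerivWithinAt_neg (convex_Ioi 2)
    (f' := fun t => (ℓ t * (1 - ℓ t) + t * ℓ' t) / (1 - ℓ t) ^ 2)
    (fun t ht => (hderiv t ht).continuousAt.continuousWithinAt) ?_ ?_ <;> rw [interior_Ioi]
  · exact fun t ht => (hderiv t ht).hasDerivWithinAt
  · exact fun t ht => div_neg_of_neg_of_pos (hnum t ht) (pow_pos (sub_pos.2 (hℓ_lt t ht)) 2)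
end

section
/- Let d ≥ 0 and m be natural numbers with 1 ≤ m ≤ 2^d. Then the sum over i = 0, …, d of min(2^i, m) is at most 2m + m·(d − log₂ m). -/
/-!
With `k = ⌊log₂ m⌋`, bound `min (2 ^ i) m` by `2 ^ i` for `i ≤ k` and by `m` for `i > k`: the sum is
below `2 ^ (k + 1) + (d - k) m`. Writing `m = 2 ^ k r` with `1 ≤ r < 2`, the claim reduces to
`r log₂ r ≤ 2 (r - 1)`, which says that the convex function `r log₂ r` lies below its chord on `[1, 2]`.
-/

open Finset Real

lemma mul_logb_two_le {r : ℝ} (hr1 : 1 ≤ r) (hr2 : r ≤ 2) : r * logb 2 r ≤ 2 * (r - 1) := by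
  have hchord := convexOn_mul_log.2 (Set.mem_Ici.2 zero_le_one) (Set.mem_Ici.2 zero_le_two)
    (by linarith : (0 : ℝ) ≤ 2 - r) (by linarith : (0 : ℝ) ≤ r - 1) (by ring)
  have hr : (2 - r) * 1 + (r - 1) * 2 = r := by ring
  simp only [smul_eq_mul, hr, log_one, mul_zero, zero_add] at hchord
  rw [logb, ← mul_div_assoc, div_le_iff₀ (log_pos one_lt_two)]
  linarith

lemma two_pow_succ_le_mul_sub_logb {x : ℝ} (k : ℕ) (hkx : 2 ^ k ≤ x) (hxk : x ≤ 2 ^ (k + 1)) :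
    (2 : ℝ) ^ (k + 1) ≤ x * (2 + k - logb 2 x) := by
  have h2k : (0 : ℝ) < 2 ^ k := by positivity
  set r := x / 2 ^ k with hr
  have hr1 : 1 ≤ r := (one_le_div h2k).2 hkx
  have hr2 : r ≤ 2 := by rwa [div_le_iff₀ h2k, ← pow_succ']
  have hx : x = 2 ^ k * r := by rw [hr]; field_simp
  have hlogb : logb 2 x = k + logb 2 r := by
    rw [hx, logb_mul h2k.ne' (by linarith), logb_pow, logb_self_eq_one one_lt_two, mul_one]
  calc (2 : ℝ) ^ (k + 1) = 2 ^ k * 2 := pow_succ 2 k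
    _ ≤ 2 ^ k * (r * (2 - logb 2 r)) := by
        gcongr
        linarith [mul_logb_two_le hr1 hr2]
    _ = x * (2 + k - logb 2 x) := by rw [hlogb, hx]; ring

lemma sum_range_min_two_pow_lt {d k : ℕ} (m : ℕ) (hkd : k ≤ d) :
    ∑ i ∈ range (d + 1), min (2 ^ i) m < 2 ^ (k + 1) + (d - k) * m := by
  rw [← sum_range_add_sum_Ico _ (by omega : k + 1 ≤ d + 1)]
  have hhead : ∑ i ∈ range (k + 1), min (2 ^ i) m < 2 ^ (k + 1) :=
    (sum_le_sum fun i _ ↦ min_le_left _ _).trans_lt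
      (Nat.geomSum_lt le_rfl fun i hi ↦ mem_range.1 hi)
  have htail : ∑ i ∈ Ico (k + 1) (d + 1), min (2 ^ i) m ≤ (d - k) * m := by
    calc ∑ i ∈ Ico (k + 1) (d + 1), min (2 ^ i) m ≤ ∑ _i ∈ Ico (k + 1) (d + 1), m :=
          sum_le_sum fun i _ ↦ min_le_right _ _
      _ = (d - k) * m := by rw [sum_const, Nat.card_Ico, smul_eq_mul]; congr 1; omega
  omega

theorem stmt_11_general (d m : ℕ) (hm2 : m ≤ 2 ^ d) :
    ((∑ i ∈ Finset.range (d + 1), min (2 ^ i) m : ℕ) : ℝ) ≤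
      2 * m + m * (d - Real.logb 2 m) := by
  rcases Nat.eq_zero_or_pos m with rfl | hm
  · simp
  set k := Nat.log 2 m
  have hkd : k ≤ d := Nat.lt_succ_iff.1 (Nat.log_lt_of_lt_pow hm.ne' (by omega))
  have hsum : ((∑ i ∈ range (d + 1), min (2 ^ i) m : ℕ) : ℝ) < 2 ^ (k + 1) + (d - k) * m := by
    rw [← Nat.cast_sub hkd]
    exact_mod_cast sum_range_min_two_pow_lt m hkd
  have hkey := two_pow_succ_le_mul_sub_logb k (x := m)
    (by exact_mod_cast Nat.pow_log_le_self 2 hm.ne')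
    (by exact_mod_cast (Nat.lt_pow_succ_log_self one_lt_two m).le)
  linarith

theorem stmt_11 (d m : ℕ) (hm1 : 1 ≤ m) (hm2 : m ≤ 2 ^ d) :
    ((∑ i ∈ Finset.range (d + 1), min (2 ^ i) m : ℕ) : ℝ) ≤
      2 * m + m * (d - Real.logb 2 m) :=
  stmt_11_general d m hm2
end

section
/- Let 0 < α < 1/2 and let n ≥ 1 be a natural number. Suppose x is a natural number with (1/2 − α/4)·n ≤ x ≤ (1/2 + α/4)·n (the left-subtree size just after rebuilding a subtree of size n). Suppose after u insertions the subtree has size n + u and left-subtree size x + v for some natural numbers u, v with 0 ≤ v ≤ u, and suppose the weight-balance condition is violated, i.e., x + v > (1/2 + α)·(n + u) or x + v < (1/2 − α)·(n + u). Then u > (3α/4)·n / (1/2 − α); in particular u > (3α/2)·n. -/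
/-!
Each insertion raises `n + u` by one and `x + v` by at most one, so the excesses
`(x + v) - (1/2 + α)(n + u)` and `(1/2 - α)(n + u) - (x + v)` each grow by at most `1/2 - α`
per insertion. Right after the rebuild both are at most `-(3α/4) n`, so more than
`(3α/4) n / (1/2 - α)` insertions are needed before either becomes positive.
-/

lemma mul_lt_of_left_overweight {a n x u v : ℝ} (hvu : v ≤ u) (hx : x ≤ (1 / 2 + a / 4) * n)
    (hviol : x + v > (1 / 2 + a) * (n + u)) :
    3 * a / 4 * n < (1 / 2 - a) * u := by
  linarith

lemma mul_lt_of_left_underweight {a n x u v : ℝ} (hv : 0 ≤ v) (hx : (1 / 2 - a / 4) * n ≤ x)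
    (hviol : x + v < (1 / 2 - a) * (n + u)) :
    3 * a / 4 * n < (1 / 2 - a) * u := by
  linarith

lemma two_mul_le_div_half_sub {a c : ℝ} (ha : a < 1 / 2) (hac : 0 ≤ a * c) :
    2 * c ≤ c / (1 / 2 - a) := by
  rw [le_div_iff₀ (by linarith)]
  linarith

theorem stmt_12_general (α : ℝ) (hα : α < 1 / 2)
    (n : ℕ) (x u v : ℕ)
    (hx1 : (1 / 2 - α / 4) * n ≤ (x : ℝ)) (hx2 : (x : ℝ) ≤ (1 / 2 + α / 4) * n)
    (hvu : v ≤ u)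
    (hviol : ((x : ℝ) + v > (1 / 2 + α) * ((n : ℝ) + u)) ∨
             ((x : ℝ) + v < (1 / 2 - α) * ((n : ℝ) + u))) :
    (u : ℝ) > (3 * α / 4) * n / (1 / 2 - α) ∧ (u : ℝ) > (3 * α / 2) * n := by
  have hslack : 3 * α / 4 * n < (1 / 2 - α) * u :=
    hviol.elim (mul_lt_of_left_overweight (by exact_mod_cast hvu) hx2)
      (mul_lt_of_left_underweight v.cast_nonneg hx1)
  have hbound : (u : ℝ) > (3 * α / 4) * n / (1 / 2 - α) := by
    rw [gt_iff_lt, div_lt_iff₀ (by linarith)]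
    linarith
  have hhalf : 2 * (3 * α / 4 * n) ≤ (3 * α / 4) * n / (1 / 2 - α) :=
    two_mul_le_div_half_sub hα (by nlinarith [mul_nonneg (sq_nonneg α) n.cast_nonneg])
  exact ⟨hbound, by linarith⟩

theorem stmt_12 (α : ℝ) (hα0 : 0 < α) (hα : α < 1 / 2)
    (n : ℕ) (hn : 1 ≤ n) (x u v : ℕ)
    (hx1 : (1 / 2 - α / 4) * n ≤ (x : ℝ)) (hx2 : (x : ℝ) ≤ (1 / 2 + α / 4) * n)
    (hvu : v ≤ u)
    (hviol : ((x : ℝ) + v > (1 / 2 + α) * ((n : ℝ) + u)) ∨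
             ((x : ℝ) + v < (1 / 2 - α) * ((n : ℝ) + u))) :
    (u : ℝ) > (3 * α / 4) * n / (1 / 2 - α) ∧ (u : ℝ) > (3 * α / 2) * n :=
  stmt_12_general α hα n x u v hx1 hx2 hvu hviol
end

section
/- Let r, c ≥ 1 and let A : Fin r × Fin c → ℕ be a matrix of counts. Define B : Fin r × Fin c → ℕ as the exclusive prefix sum of A in column-major order, i.e., B(i, j) = Σ_{j' < j} Σ_{i'} A(i', j') + Σ_{i' < i} A(i', j). Then the half-open intervals [B(i, j), B(i, j) + A(i, j)) for (i, j) ranging over Fin r × Fin c are pairwise disjoint, and their union equals [0, Σ_{i, j} A(i, j)). -/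
/-!
Column-major order is the lexicographic order on `(j, i)`, and `B` is the exclusive prefix sum of
`A` along it. Hence each interval ends where the next one in that order begins, so distinct
intervals do not overlap and all of them end by `∑ A`. Since their lengths add up to `∑ A`, they
fill `[0, ∑ A)`.
-/

open Finset Function

def prefixSum {ι : Type*} [Fintype ι] [LinearOrder ι] (f : ι → ℕ) (i : ι) : ℕ :=
  ∑ k ∈ univ.filter (· < i), f k

section PrefixSum

variable {ι : Type*} [Fintype ι] [LinearOrder ι] (f : ι → ℕ)

theorem prefixSum_add_le_sum_of_subset {i : ι} {s : Finset ι} (hi : i ∈ s)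
    (hs : ∀ k < i, k ∈ s) : prefixSum f i + f i ≤ ∑ k ∈ s, f k := by
  have hsub : insert i (univ.filter (· < i)) ⊆ s := by
    intro k hk
    rcases mem_insert.mp hk with rfl | hk
    · exact hi
    · exact hs k (mem_filter.mp hk).2
  calc prefixSum f i + f i = ∑ k ∈ insert i (univ.filter (· < i)), f k := by
        rw [sum_insert (by simp), add_comm, prefixSum]
    _ ≤ ∑ k ∈ s, f k := sum_le_sum_of_subset hsub

theorem prefixSum_add_le_prefixSum {i j : ι} (h : i < j) :
    prefixSum f i + f i ≤ prefixSum f j :=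
  prefixSum_add_le_sum_of_subset f (by simpa using h) fun k hk => by simpa using hk.trans h

theorem prefixSum_add_le_sum (i : ι) : prefixSum f i + f i ≤ ∑ k, f k :=
  prefixSum_add_le_sum_of_subset f (mem_univ i) fun k _ => mem_univ k

end PrefixSum

section Tiling

variable {ι : Type*} (B f : ι → ℕ)

theorem pairwiseDisjoint_Ico_of_add_le {κ : Type*} [LinearOrder κ] {key : ι → κ}
    (hkey : Injective key) (h : ∀ p q, key p < key q → B p + f p ≤ B q) :
    (Set.univ : Set ι).PairwiseDisjoint (fun p => Ico (B p) (B p + f p)) := by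
  intro p _ q _ hpq
  rw [Function.onFun, disjoint_left]
  intro x hxp hxq
  rw [mem_Ico] at hxp hxq
  rcases (hkey.ne hpq).lt_or_gt with hlt | hlt
  · have := h p q hlt; omega
  · have := h q p hlt; omega

theorem biUnion_Ico_eq_range [Fintype ι]
    (hdisj : (Set.univ : Set ι).PairwiseDisjoint (fun p => Ico (B p) (B p + f p)))
    (hle : ∀ p, B p + f p ≤ ∑ q, f q) :
    univ.biUnion (fun p => Ico (B p) (B p + f p)) = range (∑ p, f p) := by
  refine eq_of_subset_of_card_le (fun x hx => ?_) ?_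
  · obtain ⟨p, -, hp⟩ := mem_biUnion.mp hx
    exact mem_range.mpr ((mem_Ico.mp hp).2.trans_le (hle p))
  · rw [card_biUnion (by simpa using hdisj)]
    simp

end Tiling

section ColumnMajor

variable {r c : ℕ} (A : Fin r × Fin c → ℕ)

def colMajorOffset (p : Fin r × Fin c) : ℕ :=
  prefixSum (fun j => ∑ i, A (i, j)) p.2 + prefixSum (fun i => A (i, p.2)) p.1

theorem colMajorOffset_add_le_prefixSum_add (p : Fin r × Fin c) :
    colMajorOffset A p + A p ≤ prefixSum (fun j => ∑ i, A (i, j)) p.2 + ∑ i, A (i, p.2) := by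
  rw [colMajorOffset, add_assoc]
  exact Nat.add_le_add_left (prefixSum_add_le_sum (fun i => A (i, p.2)) p.1) _

theorem colMajorOffset_add_le_colMajorOffset {p q : Fin r × Fin c}
    (h : toLex (p.2, p.1) < toLex (q.2, q.1)) :
    colMajorOffset A p + A p ≤ colMajorOffset A q := by
  obtain ⟨i, j⟩ := p
  obtain ⟨i', j'⟩ := q
  rcases Prod.Lex.toLex_lt_toLex.mp h with hj | ⟨rfl, hi⟩
  · calc colMajorOffset A (i, j) + A (i, j)
        ≤ prefixSum (fun j => ∑ i, A (i, j)) j + ∑ i, A (i, j) :=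
          colMajorOffset_add_le_prefixSum_add A (i, j)
      _ ≤ prefixSum (fun j => ∑ i, A (i, j)) j' :=
          prefixSum_add_le_prefixSum (fun j => ∑ i, A (i, j)) hj
      _ ≤ colMajorOffset A (i', j') := Nat.le_add_right _ _
  · rw [colMajorOffset, colMajorOffset, add_assoc]
    exact Nat.add_le_add_left (prefixSum_add_le_prefixSum (fun i => A (i, j)) hi) _

theorem colMajorOffset_add_le_sum (p : Fin r × Fin c) :
    colMajorOffset A p + A p ≤ ∑ q, A q := by
  calc colMajorOffset A p + A p
      ≤ prefixSum (fun j => ∑ i, A (i, j)) p.2 + ∑ i, A (i, p.2) :=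
        colMajorOffset_add_le_prefixSum_add A p
    _ ≤ ∑ j, ∑ i, A (i, j) := prefixSum_add_le_sum (fun j => ∑ i, A (i, j)) p.2
    _ = ∑ q, A q := (Fintype.sum_prod_type_right A).symm

end ColumnMajor

theorem stmt_13_general (r c : ℕ)
    (A B : Fin r × Fin c → ℕ)
    (hB : ∀ p : Fin r × Fin c,
      B p = (∑ j' ∈ Finset.univ.filter (fun j' : Fin c => j' < p.2), ∑ i' : Fin r, A (i', j'))
            + ∑ i' ∈ Finset.univ.filter (fun i' : Fin r => i' < p.1), A (i', p.2)) :
    (Set.univ : Set (Fin r × Fin c)).PairwiseDisjoint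
        (fun p => Finset.Ico (B p) (B p + A p)) ∧
      Finset.univ.biUnion (fun p : Fin r × Fin c => Finset.Ico (B p) (B p + A p)) =
        Finset.range (∑ p : Fin r × Fin c, A p) := by
  obtain rfl : B = colMajorOffset A := funext hB
  have hdisj := pairwiseDisjoint_Ico_of_add_le (colMajorOffset A) A
    (key := fun p => toLex (p.2, p.1)) (fun p q h => Prod.swap_injective (toLex.injective h))
    (fun _ _ => colMajorOffset_add_le_colMajorOffset A)
  exact ⟨hdisj, biUnion_Ico_eq_range _ _ hdisj (colMajorOffset_add_le_sum A)⟩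

theorem stmt_13 (r c : ℕ) (hr : 1 ≤ r) (hc : 1 ≤ c)
    (A B : Fin r × Fin c → ℕ)
    (hB : ∀ p : Fin r × Fin c,
      B p = (∑ j' ∈ Finset.univ.filter (fun j' : Fin c => j' < p.2), ∑ i' : Fin r, A (i', j'))
            + ∑ i' ∈ Finset.univ.filter (fun i' : Fin r => i' < p.1), A (i', p.2)) :
    (Set.univ : Set (Fin r × Fin c)).PairwiseDisjoint
        (fun p => Finset.Ico (B p) (B p + A p)) ∧
      Finset.univ.biUnion (fun p : Fin r × Fin c => Finset.Ico (B p) (B p + A p)) =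
        Finset.range (∑ p : Fin r × Fin c, A p) :=
  stmt_13_general r c A B hB
end
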